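/- arXiv:1104.4692 — 2 statements merged into one kernel-verified Lean document; each statement's English description precedes it below -/
import Mathlib

section
/- Let d ≥ 2, let X be a finite nonempty subset of Ω(d), and let 𝒯 be a lower set in ℕ×ℕ. Then X is a complex spherical 𝒯-design if and only if Σ_{x,y∈X} g_{k,l}(x^*y) = 0 for every (k,l) ∈ 𝒯 with (k,l) ≠ (0,0). -/
open Finset

/-- The Hermitian inner product `x^* y = ∑ i, conj (x i) * y i` on `ℂ^d`. -/
noncomputable def cInner {d : ℕ} (x y : Fin d → ℂ) : ℂ :=
  ∑ i, (starRingEnd ℂ) (x i) * y i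

/-- A lower set in `ℕ × ℕ` with respect to the product order. -/
def IsLowerSet' (T : Finset (ℕ × ℕ)) : Prop :=
  ∀ kl ∈ T, ∀ mn : ℕ × ℕ, mn.1 ≤ kl.1 → mn.2 ≤ kl.2 → mn ∈ T

/-- The average over the unit sphere `Ω(d)` of the monomial
`z ↦ ∏ i, z i ^ a i * conj (z i) ^ b i`. -/
noncomputable def monomialAvg (d : ℕ) (a b : Fin d → ℕ) : ℂ :=
  if a = b then
    ((Nat.factorial (d - 1) : ℂ) * ∏ i, (Nat.factorial (a i) : ℂ)) /
      (Nat.factorial (d + (∑ i, a i) - 1) : ℂ)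
  else 0

/-- `X` is a complex spherical `T`-design: every monomial of bidegree `(k,l) ∈ T`
has the same average over `X` as over the sphere `Ω(d)`. -/
def IsDesign (d : ℕ) (X : Finset (Fin d → ℂ)) (T : Finset (ℕ × ℕ)) : Prop :=
  ∀ kl ∈ T, ∀ a b : Fin d → ℕ, (∑ i, a i) = kl.1 → (∑ i, b i) = kl.2 →
    (∑ z ∈ X, (∏ i, (z i) ^ (a i)) * ∏ i, ((starRingEnd ℂ) (z i)) ^ (b i))
      = (X.card : ℂ) * monomialAvg d a b

/-- The Jacobi polynomial `g_{k,l}` for the complex sphere in dimension `d`. -/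
noncomputable def jacobi (d k l : ℕ) (x : ℂ) : ℂ :=
  (((d + k + l - 1 : ℕ) : ℂ) / (Nat.factorial (d - 1) : ℂ)) *
    ∑ r ∈ Finset.range (min k l + 1),
      (((-1 : ℂ) ^ r * (Nat.factorial (d + k + l - r - 2) : ℂ)) /
          ((Nat.factorial r : ℂ) * (Nat.factorial (k - r) : ℂ) *
            (Nat.factorial (l - r) : ℂ))) *
        x ^ (k - r) * ((starRingEnd ℂ) x) ^ (l - r)

open scoped Classical in
/-- The inner product set `A(X) = {x^* y : x, y ∈ X, x ≠ y}`. -/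
noncomputable def innerSet {d : ℕ} (X : Finset (Fin d → ℂ)) : Finset ℂ :=
  ((X ×ˢ X).filter fun p => p.1 ≠ p.2).image fun p => cInner p.1 p.2

/-- `m_{k,l}`, the dimension of the harmonic space `Harm(k,l)` in dimension `d`. -/
def mdim (d k l : ℕ) : ℕ :=
  (d + k - 1).choose (d - 1) * (d + l - 1).choose (d - 1) -
    (d + k - 2).choose (d - 1) * (d + l - 2).choose (d - 1)

/-- The convolution `U * V = {(k + l', k' + l) : (k,l) ∈ U, (k',l') ∈ V}`. -/
def convSet (U V : Finset (ℕ × ℕ)) : Finset (ℕ × ℕ) :=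
  (U ×ˢ V).image fun p => (p.1.1 + p.2.2, p.2.1 + p.1.2)

/-- `X` is an `S`-code: it has an annihilator polynomial supported on monomials
`x^k * conj x^l` with `(k,l) ∈ S`. -/
def IsCode (d : ℕ) (X : Finset (Fin d → ℂ)) (S : Finset (ℕ × ℕ)) : Prop :=
  ∃ c : ℕ × ℕ → ℝ,
    (∀ α ∈ innerSet X, ∑ kl ∈ S, (c kl : ℂ) * α ^ kl.1 * ((starRingEnd ℂ) α) ^ kl.2 = 0) ∧
    0 < ∑ kl ∈ S, c kl

open scoped Classical

/-! Expanding `(x^* y)^k` by the multinomial theorem writes the Gram sum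
`∑_{x,y ∈ X} (x^* y)^k conj (x^* y)^l` as a positive combination of the squared moduli of the
moments `∑_{z ∈ X} z^a conj z^b`. On the sphere, subtracting from it the value it takes for a
design leaves `∑ m_a m_b |moment - |X| · sphere average|²` (multinomial weights `m_a`), so `X`
is a design in bidegree `(k,l)` exactly when its Gram sum takes the design value. The Jacobi
double sum is a combination of the Gram sums in bidegrees `(k-r, l-r)` with nonzero leading
coefficient that vanishes on the design values, and induction over the lower set finishes the
proof. -/

lemma conj_cInner {d : ℕ} (x y : Fin d → ℂ) : (starRingEnd ℂ) (cInner x y) = cInner y x := by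
  simp only [cInner, map_sum, map_mul, Complex.conj_conj]
  exact sum_congr rfl fun i _ => mul_comm _ _

lemma cInner_pow {d : ℕ} (x y : Fin d → ℂ) (k : ℕ) :
    cInner x y ^ k = ∑ a ∈ piAntidiag univ k, (Nat.multinomial univ a : ℂ) *
      ((∏ i, (starRingEnd ℂ) (x i) ^ a i) * ∏ i, y i ^ a i) := by
  rw [cInner, sum_pow_eq_sum_piAntidiag]
  refine sum_congr rfl fun a _ => ?_
  simp [mul_pow, prod_mul_distrib]

lemma card_piAntidiag_univ_fin {d : ℕ} (k : ℕ) :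
    (piAntidiag (univ : Finset (Fin d)) k).card = (d + k - 1).choose k := by
  rw [← map_sym_eq_piAntidiag, card_map, sym_univ, card_univ, Sym.card_sym_eq_choose]
  simp

theorem Polynomial.sum_range_neg_one_pow_mul_choose_mul_eval {R : Type*} [CommRing R]
    {P : Polynomial R} {n : ℕ} (hP : P.natDegree < n) (y : R) :
    ∑ s ∈ range (n + 1), (-1 : R) ^ (n - s) * n.choose s * P.eval (y + s) = 0 := by
  have := congrFun (Polynomial.fwdDiff_iter_eq_zero_of_degree_lt hP) y
  rw [fwdDiff_iter_eq_sum_shift] at this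
  simpa [zsmul_eq_mul] using this

theorem forall_eq_iff_forall_sum_eq_zero_of_triangular {R : Type*} [Ring R] [NoZeroDivisors R]
    {T : Finset (ℕ × ℕ)} (hT : IsLowerSet' T) {f g : ℕ → ℕ → R} {c : ℕ → ℕ → ℕ → R}
    (hc : ∀ k l, c k l 0 ≠ 0)
    (hg : ∀ k l, (k, l) ≠ (0, 0) → ∑ r ∈ range (min k l + 1), c k l r * g (k - r) (l - r) = 0)
    (h00 : f 0 0 = g 0 0) :
    (∀ kl ∈ T, f kl.1 kl.2 = g kl.1 kl.2) ↔
      ∀ kl ∈ T, kl ≠ (0, 0) →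
        ∑ r ∈ range (min kl.1 kl.2 + 1), c kl.1 kl.2 r * f (kl.1 - r) (kl.2 - r) = 0 := by
  constructor
  · rintro h ⟨k, l⟩ hkl h0
    rw [← hg k l h0]
    exact sum_congr rfl fun r _ => by
      rw [h (k - r, l - r) (hT _ hkl _ (Nat.sub_le k r) (Nat.sub_le l r))]
  · intro h
    suffices ∀ n k l, k + l = n → (k, l) ∈ T → f k l = g k l from
      fun kl hkl => this _ kl.1 kl.2 rfl hkl
    intro n
    induction n using Nat.strong_induction_on with
    | _ n ih =>
    intro k l hn hkl
    rcases eq_or_ne (k, l) (0, 0) with h0 | h0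
    · obtain ⟨rfl, rfl⟩ := Prod.ext_iff.1 h0
      exact h00
    have hdiff : ∑ r ∈ range (min k l + 1),
        c k l r * (f (k - r) (l - r) - g (k - r) (l - r)) = 0 := by
      simp only [mul_sub, sum_sub_distrib, h (k, l) hkl h0, hg k l h0, sub_zero]
    rw [sum_range_succ', sum_eq_zero fun i hi => ?_, zero_add, Nat.sub_zero, Nat.sub_zero] at hdiff
    · exact sub_eq_zero.1 ((mul_eq_zero.1 hdiff).resolve_left (hc k l))
    · have hi : i + 1 ≤ min k l := mem_range.1 hi
      rw [ih _ (by omega) _ _ rfl (hT _ hkl _ (Nat.sub_le k _) (Nat.sub_le l _)), sub_self,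
        mul_zero]

namespace ComplexDesign

variable {d : ℕ}

noncomputable def moment (X : Finset (Fin d → ℂ)) (a b : Fin d → ℕ) : ℂ :=
  ∑ z ∈ X, (∏ i, z i ^ a i) * ∏ i, (starRingEnd ℂ) (z i) ^ b i

def IsDesignAt (d : ℕ) (X : Finset (Fin d → ℂ)) (k l : ℕ) : Prop :=
  ∀ a b : Fin d → ℕ, ∑ i, a i = k → ∑ i, b i = l → moment X a b = X.card * monomialAvg d a b

noncomputable def gramSum (X : Finset (Fin d → ℂ)) (k l : ℕ) : ℂ :=
  ∑ x ∈ X, ∑ y ∈ X, cInner x y ^ k * (starRingEnd ℂ) (cInner x y) ^ l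

noncomputable def designGramSum (d N k l : ℕ) : ℂ :=
  if k = l then (N : ℂ) ^ 2 / (d + k - 1).choose k else 0

noncomputable def jacobiCoeff (d k l r : ℕ) : ℂ :=
  ((-1 : ℂ) ^ r * (Nat.factorial (d + k + l - r - 2) : ℂ)) /
    ((Nat.factorial r : ℂ) * (Nat.factorial (k - r) : ℂ) * (Nat.factorial (l - r) : ℂ))

lemma moment_swap (X : Finset (Fin d → ℂ)) (a b : Fin d → ℕ) :
    moment X b a = (starRingEnd ℂ) (moment X a b) := by
  simp only [moment, map_sum, map_mul, map_prod, map_pow, Complex.conj_conj]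
  exact sum_congr rfl fun z _ => mul_comm _ _

lemma gramSum_eq_sum_moment (X : Finset (Fin d → ℂ)) (k l : ℕ) :
    gramSum X k l = ∑ a ∈ piAntidiag univ k, ∑ b ∈ piAntidiag univ l,
      (Nat.multinomial univ a * Nat.multinomial univ b : ℂ) *
        ((starRingEnd ℂ) (moment X a b) * moment X a b) := by
  have hxy : ∀ x y : Fin d → ℂ, cInner x y ^ k * (starRingEnd ℂ) (cInner x y) ^ l =
      ∑ a ∈ piAntidiag univ k, ∑ b ∈ piAntidiag univ l,
        (Nat.multinomial univ a * Nat.multinomial univ b : ℂ) *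
          (((∏ i, x i ^ b i) * ∏ i, (starRingEnd ℂ) (x i) ^ a i) *
            ((∏ i, y i ^ a i) * ∏ i, (starRingEnd ℂ) (y i) ^ b i)) := by
    intro x y
    rw [conj_cInner, cInner_pow, cInner_pow, sum_mul_sum]
    exact sum_congr rfl fun a _ => sum_congr rfl fun b _ => by ring
  have hab : ∀ a b, (Nat.multinomial univ a * Nat.multinomial univ b : ℂ) *
      ((starRingEnd ℂ) (moment X a b) * moment X a b) =
        ∑ x ∈ X, ∑ y ∈ X, (Nat.multinomial univ a * Nat.multinomial univ b : ℂ) *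
          (((∏ i, x i ^ b i) * ∏ i, (starRingEnd ℂ) (x i) ^ a i) *
            ((∏ i, y i ^ a i) * ∏ i, (starRingEnd ℂ) (y i) ^ b i)) := by
    intro a b
    rw [← moment_swap, moment, moment, sum_mul_sum]
    simp only [mul_sum]
  simp only [gramSum, hxy, hab, sum_comm (s := X) (t := piAntidiag univ k),
    sum_comm (s := X) (t := piAntidiag univ l)]

lemma sum_multinomial_mul_moment_self (X : Finset (Fin d → ℂ))
    (hX : ∀ x ∈ X, cInner x x = 1) (k : ℕ) :
    ∑ a ∈ piAntidiag univ k, (Nat.multinomial univ a : ℂ) * moment X a a = X.card := by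
  calc ∑ a ∈ piAntidiag univ k, (Nat.multinomial univ a : ℂ) * moment X a a
      = ∑ z ∈ X, cInner z z ^ k := by
        simp only [moment, mul_sum, cInner_pow]
        rw [sum_comm]
        exact sum_congr rfl fun z _ => sum_congr rfl fun a _ => by ring
    _ = X.card := by rw [sum_congr rfl fun z hz => by rw [hX z hz]]; simp

lemma conj_monomialAvg (a b : Fin d → ℕ) :
    (starRingEnd ℂ) (monomialAvg d a b) = monomialAvg d a b := by
  unfold monomialAvg
  split_ifs <;> simp

lemma multinomial_mul_monomialAvg_self (hd : 0 < d) {a : Fin d → ℕ} {k : ℕ}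
    (ha : ∑ i, a i = k) :
    (Nat.multinomial univ a : ℂ) * monomialAvg d a a = ((d + k - 1).choose k : ℂ)⁻¹ := by
  have hmult : (∏ i, (a i).factorial) * Nat.multinomial univ a = k.factorial := by
    rw [Nat.multinomial_spec, ha]
  have hchoose :
      (d + k - 1).choose k * k.factorial * (d - 1).factorial = (d + k - 1).factorial := by
    rw [← Nat.choose_mul_factorial_mul_factorial (show k ≤ d + k - 1 by omega),
      show d + k - 1 - k = d - 1 by omega]
  have hC : ((d + k - 1).choose k : ℂ) ≠ 0 := by
    exact_mod_cast (Nat.choose_pos (show k ≤ d + k - 1 by omega)).ne'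
  have hpos : Nat.multinomial univ a * (d - 1).factorial * ∏ i, (a i).factorial ≠ 0 := by
    have := Nat.multinomial_pos univ a
    positivity
  rw [monomialAvg, if_pos rfl, ha, ← hchoose, ← hmult]
  push_cast
  field_simp
  exact div_self (by exact_mod_cast hpos)

lemma sum_sum_multinomial_mul_monomialAvg_mul (hd : 0 < d)
    (F : (Fin d → ℕ) → (Fin d → ℕ) → ℂ) (k l : ℕ) :
    ∑ a ∈ piAntidiag univ k, ∑ b ∈ piAntidiag univ l,
        (Nat.multinomial univ a * Nat.multinomial univ b : ℂ) * monomialAvg d a b * F a b =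
      if k = l then
        (∑ a ∈ piAntidiag univ k, (Nat.multinomial univ a : ℂ) * F a a) / (d + k - 1).choose k
      else 0 := by
  split_ifs with hkl
  · subst hkl
    rw [sum_div]
    refine sum_congr rfl fun a ha => ?_
    rw [sum_eq_single_of_mem a ha fun b _ hba => by rw [monomialAvg, if_neg (Ne.symm hba)]; simp,
      div_eq_mul_inv, ← multinomial_mul_monomialAvg_self hd (mem_piAntidiag.1 ha).1]
    ring
  · refine sum_eq_zero fun a ha => sum_eq_zero fun b hb => ?_
    have hab : a ≠ b := by
      rintro rfl
      exact hkl ((mem_piAntidiag.1 ha).1.symm.trans (mem_piAntidiag.1 hb).1)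
    simp [monomialAvg, hab]

lemma gramSum_sub_designGramSum (hd : 0 < d) (X : Finset (Fin d → ℂ))
    (hX : ∀ x ∈ X, cInner x x = 1) (k l : ℕ) :
    gramSum X k l - designGramSum d X.card k l =
      ((∑ a ∈ piAntidiag univ k, ∑ b ∈ piAntidiag univ l,
        (Nat.multinomial univ a * Nat.multinomial univ b : ℝ) *
          Complex.normSq (moment X a b - X.card * monomialAvg d a b) : ℝ) : ℂ) := by
  set N : ℂ := ((X.card : ℕ) : ℂ)
  have hterm : ∀ a b, (((Nat.multinomial univ a * Nat.multinomial univ b : ℝ) *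
      Complex.normSq (moment X a b - N * monomialAvg d a b) : ℝ) : ℂ) =
        (Nat.multinomial univ a * Nat.multinomial univ b : ℂ) *
            ((starRingEnd ℂ) (moment X a b) * moment X a b)
          - N * ((Nat.multinomial univ a * Nat.multinomial univ b : ℂ) * monomialAvg d a b *
              moment X a b)
          - N * ((Nat.multinomial univ a * Nat.multinomial univ b : ℂ) * monomialAvg d a b *
              (starRingEnd ℂ) (moment X a b))
          + N ^ 2 * ((Nat.multinomial univ a * Nat.multinomial univ b : ℂ) * monomialAvg d a b *
              monomialAvg d a b) := by
    intro a b
    rw [Complex.ofReal_mul, Complex.normSq_eq_conj_mul_self, map_sub, map_mul,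
      conj_monomialAvg, Complex.conj_natCast]
    push_cast
    ring
  have hC : ((d + k - 1).choose k : ℂ) ≠ 0 := by
    exact_mod_cast (Nat.choose_pos (show k ≤ d + k - 1 by omega)).ne'
  have hself : ∑ a ∈ piAntidiag univ k, (Nat.multinomial univ a : ℂ) * monomialAvg d a a = 1 := by
    rw [sum_congr rfl fun a ha =>
      multinomial_mul_monomialAvg_self hd (mem_piAntidiag.1 ha).1, sum_const,
      card_piAntidiag_univ_fin, nsmul_eq_mul, mul_inv_cancel₀ hC]
  have hconj : ∑ a ∈ piAntidiag univ k, (Nat.multinomial univ a : ℂ) *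
      (starRingEnd ℂ) (moment X a a) = N := by
    simpa using congrArg (starRingEnd ℂ) (sum_multinomial_mul_moment_self X hX k)
  simp only [Complex.ofReal_sum, hterm, sum_add_distrib, sum_sub_distrib, ← mul_sum,
    sum_sum_multinomial_mul_monomialAvg_mul hd, ← gramSum_eq_sum_moment, designGramSum,
    sum_multinomial_mul_moment_self X hX, hconj, hself]
  split_ifs
  · field_simp
    ring
  · ring

lemma isDesignAt_iff_gramSum_eq (hd : 0 < d) (X : Finset (Fin d → ℂ))
    (hX : ∀ x ∈ X, cInner x x = 1) (k l : ℕ) :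
    IsDesignAt d X k l ↔ gramSum X k l = designGramSum d X.card k l := by
  have hterm_nonneg : ∀ a b, 0 ≤ (Nat.multinomial univ a * Nat.multinomial univ b : ℝ) *
      Complex.normSq (moment X a b - X.card * monomialAvg d a b) :=
    fun a b => mul_nonneg (by positivity) (Complex.normSq_nonneg _)
  rw [← sub_eq_zero, gramSum_sub_designGramSum hd X hX, Complex.ofReal_eq_zero,
    sum_eq_zero_iff_of_nonneg fun a _ => sum_nonneg fun b _ => hterm_nonneg a b]
  simp only [sum_eq_zero_iff_of_nonneg fun b _ => hterm_nonneg _ b, mem_piAntidiag, mem_univ,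
    implies_true, and_true, mul_eq_zero, Nat.cast_eq_zero, (Nat.multinomial_pos _ _).ne',
    Complex.normSq_eq_zero, sub_eq_zero, false_or, IsDesignAt]
  exact ⟨fun h a b ha hb => h a ha b hb, fun h a ha b hb => h a b ha hb⟩

lemma gramSum_zero_zero (X : Finset (Fin d → ℂ)) :
    gramSum X 0 0 = designGramSum d X.card 0 0 := by
  simp [gramSum, designGramSum, sq]

lemma sum_sum_jacobi (X : Finset (Fin d → ℂ)) (k l : ℕ) :
    ∑ x ∈ X, ∑ y ∈ X, jacobi d k l (cInner x y) =
      ((d + k + l - 1 : ℕ) : ℂ) / (d - 1).factorial *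
        ∑ r ∈ range (min k l + 1), jacobiCoeff d k l r * gramSum X (k - r) (l - r) := by
  simp only [jacobi, gramSum, mul_sum, sum_comm (s := X) (t := range (min k l + 1))]
  exact sum_congr rfl fun r _ => sum_congr rfl fun x _ => sum_congr rfl fun y _ => by
    rw [jacobiCoeff]; ring

lemma jacobiCoeff_zero_ne_zero (d k l : ℕ) : jacobiCoeff d k l 0 ≠ 0 := by
  simp [jacobiCoeff, Nat.factorial_ne_zero]

lemma jacobiCoeff_mul_designGramSum_self (hd : 0 < d) (N : ℕ) {k s : ℕ} (hk : 0 < k)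
    (hs : s ≤ k) :
    jacobiCoeff d k k (k - s) * designGramSum d N s s =
      N ^ 2 * (d - 1).factorial / k.factorial *
        ((-1) ^ (k - s) * k.choose s * (ascPochhammer ℂ (k - 1)).eval ((d : ℂ) + s)) := by
  have hasc :
      (ascPochhammer ℂ (k - 1)).eval ((d : ℂ) + s) = ((d + s).ascFactorial (k - 1) : ℂ) := by
    rw [← ascPochhammer_nat_eq_ascFactorial, ascPochhammer_eval_cast, Nat.cast_add]
  have hfact : (d + s - 1).factorial * (d + s).ascFactorial (k - 1) =
      (d + k + k - (k - s) - 2).factorial := by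
    rw [show d + k + k - (k - s) - 2 = d + s - 1 + (k - 1) by omega,
      ← Nat.factorial_mul_ascFactorial, show d + s - 1 + 1 = d + s by omega]
  have hchoose :
      (d + s - 1).choose s * s.factorial * (d - 1).factorial = (d + s - 1).factorial := by
    rw [← Nat.choose_mul_factorial_mul_factorial (show s ≤ d + s - 1 by omega),
      show d + s - 1 - s = d - 1 by omega]
  have hks : k.choose s * s.factorial * (k - s).factorial = k.factorial :=
    Nat.choose_mul_factorial_mul_factorial hs
  rw [jacobiCoeff, designGramSum, if_pos rfl, hasc, ← hfact, ← hchoose,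
    show k - (k - s) = s by omega, ← hks]
  have hC : ((d + s - 1).choose s : ℂ) ≠ 0 := by
    exact_mod_cast (Nat.choose_pos (show s ≤ d + s - 1 by omega)).ne'
  have hCk : (k.choose s : ℂ) ≠ 0 := by exact_mod_cast (Nat.choose_pos hs).ne'
  push_cast
  field_simp

lemma sum_jacobiCoeff_mul_designGramSum (hd : 0 < d) (N : ℕ) {k l : ℕ}
    (hkl : (k, l) ≠ (0, 0)) :
    ∑ r ∈ range (min k l + 1), jacobiCoeff d k l r * designGramSum d N (k - r) (l - r) = 0 := by
  by_cases hkl' : k = l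
  · subst hkl'
    have hk : 0 < k := Nat.pos_of_ne_zero fun hk => hkl (by rw [hk])
    -- after `r ↦ k - r` this is the `k`-th forward difference of a polynomial of degree `k - 1`
    rw [min_self, ← sum_range_reflect]
    have hterm : ∀ s ∈ range (k + 1),
        jacobiCoeff d k k (k + 1 - 1 - s) *
            designGramSum d N (k - (k + 1 - 1 - s)) (k - (k + 1 - 1 - s)) =
          N ^ 2 * (d - 1).factorial / k.factorial *
            ((-1) ^ (k - s) * k.choose s * (ascPochhammer ℂ (k - 1)).eval ((d : ℂ) + s)) := by
      intro s hs
      have hs : s ≤ k := Nat.lt_succ_iff.1 (mem_range.1 hs)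
      rw [Nat.add_sub_cancel, show k - (k - s) = s by omega,
        jacobiCoeff_mul_designGramSum_self hd N hk hs]
    rw [sum_congr rfl hterm, ← mul_sum,
      Polynomial.sum_range_neg_one_pow_mul_choose_mul_eval (by rw [ascPochhammer_natDegree]; omega),
      mul_zero]
  · refine sum_eq_zero fun r hr => ?_
    have hr : r ≤ min k l := Nat.lt_succ_iff.1 (mem_range.1 hr)
    rw [designGramSum, if_neg (by omega), mul_zero]

end ComplexDesign

theorem stmt_1_general {d : ℕ} (hd : 2 ≤ d) (X : Finset (Fin d → ℂ))
    (hXsphere : ∀ x ∈ X, cInner x x = 1)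
    (T : Finset (ℕ × ℕ)) (hT : IsLowerSet' T) :
    IsDesign d X T ↔
      ∀ kl ∈ T, kl ≠ (0, 0) →
        ∑ x ∈ X, ∑ y ∈ X, jacobi d kl.1 kl.2 (cInner x y) = 0 := by
  have hd0 : 0 < d := by omega
  change (∀ kl ∈ T, ComplexDesign.IsDesignAt d X kl.1 kl.2) ↔ _
  simp only [ComplexDesign.isDesignAt_iff_gramSum_eq hd0 X hXsphere]
  rw [forall_eq_iff_forall_sum_eq_zero_of_triangular hT
    (ComplexDesign.jacobiCoeff_zero_ne_zero d)
    (fun _ _ => ComplexDesign.sum_jacobiCoeff_mul_designGramSum hd0 X.card)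
    (ComplexDesign.gramSum_zero_zero X)]
  refine forall₂_congr fun kl _ => imp_congr_right fun _ => ?_
  have hprefactor : ((d + kl.1 + kl.2 - 1 : ℕ) : ℂ) / (d - 1).factorial ≠ 0 :=
    div_ne_zero (Nat.cast_ne_zero.2 (by omega)) (Nat.cast_ne_zero.2 (Nat.factorial_ne_zero _))
  rw [ComplexDesign.sum_sum_jacobi, mul_eq_zero, or_iff_right hprefactor]

/-- `X` is a complex spherical `T`-design iff all the Jacobi polynomial
double sums vanish for `(k,l) ∈ T`, `(k,l) ≠ (0,0)`. -/
theorem stmt_1 {d : ℕ} (hd : 2 ≤ d) (X : Finset (Fin d → ℂ)) (hXne : X.Nonempty)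
    (hXsphere : ∀ x ∈ X, cInner x x = 1)
    (T : Finset (ℕ × ℕ)) (hT : IsLowerSet' T) :
    IsDesign d X T ↔
      ∀ kl ∈ T, kl ≠ (0, 0) →
        ∑ x ∈ X, ∑ y ∈ X, jacobi d kl.1 kl.2 (cInner x y) = 0 :=
  stmt_1_general hd X hXsphere T hT
end

section
/- Let d ≥ 2 and let X be any finite subset of Ω(d). Then for every (k,l) ∈ ℕ×ℕ, the sum Σ_{a,b∈X} g_{k,l}(a^*b) is a nonnegative real number. -/
/-!
Polynomials in `z` and `z̄` carry the Fischer inner product `⟨f, g⟩ = ∑ₘ m! · conj fₘ · gₘ`, which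
is positive semidefinite and makes multiplication by a variable adjoint to differentiation in it.
With `c_r` the coefficients of `g_{k,l}`, the polynomial
`Z_b = ∑ᵣ c_r (b^* z)^(k-r) (z^* b)^(l-r) (z^* z)^r` is harmonic for a unit vector `b` (the `c_r`
obey exactly the recurrence that makes its Laplacian telescope to zero), and adjointness evaluates
`⟨Z_b, Z_a⟩` as a positive multiple of `g_{k,l}(a^* b)`. Hence `∑_{a,b ∈ X} g_{k,l}(a^* b)` is a
positive multiple of `⟨W, W⟩ ≥ 0` for `W = ∑_{a ∈ X} Z_a`.
-/

open Finset

open Finset MvPolynomial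
open scoped ComplexOrder Nat

noncomputable section

lemma natCast_mul_pow_sub_one_mul {R : Type*} [CommSemiring R] (x : R) (m : ℕ) :
    (m : R) * x ^ (m - 1) * x = m * x ^ m := by
  cases m <;> simp [pow_succ, mul_assoc]

lemma Finset.sum_range_succ_add_shift {M : Type*} [AddCommMonoid M] (f g : ℕ → M) (n : ℕ) :
    ∑ r ∈ range (n + 1), (f r + g r) = ∑ r ∈ range n, (f r + g (r + 1)) + f n + g 0 := by
  rw [sum_add_distrib, sum_range_succ, sum_range_succ' g, sum_add_distrib]
  abel

lemma Derivation.iterate_apply_pow_mul {R A : Type*} [CommSemiring R] [CommSemiring A]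
    [Algebra R A] (D : Derivation R A A) {x y : A} {c : R} (hx : D x = algebraMap R A c)
    (hy : D y = 0) (k n : ℕ) :
    (⇑D)^[k] (x ^ n * y) = ((n.descFactorial k : R) * c ^ k) • (x ^ (n - k) * y) := by
  induction k with
  | zero => simp
  | succ k ih =>
    rw [Function.iterate_succ_apply', ih, D.map_smul, D.leibniz, D.leibniz_pow, hx, hy,
      Nat.descFactorial_succ, Nat.sub_sub]
    simp only [smul_eq_mul, nsmul_eq_mul, mul_zero, zero_add]
    simp only [Algebra.smul_def, Nat.cast_mul, map_mul, map_pow, _root_.map_natCast]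
    ring

namespace MvPolynomial

section Fischer

variable {σ : Type*}

def fischerWeight (m : σ →₀ ℕ) : ℕ := m.prod fun _ n => n !

lemma fischerWeight_add_single (m : σ →₀ ℕ) (i : σ) :
    fischerWeight (m + Finsupp.single i 1) = fischerWeight m * (m i + 1) := by
  classical
  have h0 : ∀ j : σ, (fun _ n => n !) j 0 = 1 := fun _ => Nat.factorial_zero
  rw [fischerWeight, fischerWeight, ← Finsupp.mul_prod_erase' (m + Finsupp.single i 1) i _ h0,
    ← Finsupp.mul_prod_erase' m i _ h0, Finsupp.erase_add, Finsupp.erase_single, add_zero]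
  simp [Nat.factorial_succ]
  ring

lemma sum_fischerWeight_eq_of_support_subset {f : MvPolynomial σ ℂ} {s : Finset (σ →₀ ℕ)}
    (hs : f.support ⊆ s) (g : MvPolynomial σ ℂ) :
    ∑ m ∈ f.support, (fischerWeight m : ℂ) * star (coeff m f) * coeff m g =
      ∑ m ∈ s, (fischerWeight m : ℂ) * star (coeff m f) * coeff m g :=
  sum_subset hs fun m _ hm => by simp [notMem_support_iff.mp hm]

def fischer : MvPolynomial σ ℂ →ₗ⋆[ℂ] MvPolynomial σ ℂ →ₗ[ℂ] ℂ :=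
  LinearMap.mk₂'ₛₗ (starRingEnd ℂ) (RingHom.id ℂ)
    (fun f g => ∑ m ∈ f.support, (fischerWeight m : ℂ) * star (coeff m f) * coeff m g)
    (fun f₁ f₂ g => by
      classical
      rw [sum_fischerWeight_eq_of_support_subset support_add,
        sum_fischerWeight_eq_of_support_subset (subset_union_left (s₂ := f₂.support)),
        sum_fischerWeight_eq_of_support_subset (subset_union_right (s₁ := f₁.support)),
        ← sum_add_distrib]
      simp only [coeff_add, star_add]
      exact sum_congr rfl fun _ _ => by ring)
    (fun c f g => by
      rw [sum_fischerWeight_eq_of_support_subset support_smul, smul_eq_mul, mul_sum]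
      simp only [coeff_smul, smul_eq_mul, star_mul', Complex.star_def]
      exact sum_congr rfl fun _ _ => by ring)
    (fun f g₁ g₂ => by simp only [coeff_add, mul_add, sum_add_distrib])
    (fun c f g => by
      simp only [coeff_smul, smul_eq_mul, mul_sum, RingHom.id_apply]
      exact sum_congr rfl fun _ _ => by ring)

lemma fischer_apply (f g : MvPolynomial σ ℂ) :
    fischer f g = ∑ m ∈ f.support, (fischerWeight m : ℂ) * star (coeff m f) * coeff m g :=
  rfl

lemma fischer_self_nonneg (f : MvPolynomial σ ℂ) : 0 ≤ fischer f f := by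
  rw [fischer_apply]
  refine sum_nonneg fun m _ => ?_
  rw [mul_assoc]
  exact mul_nonneg (Nat.cast_nonneg _) (star_mul_self_nonneg _)

lemma star_fischer (f g : MvPolynomial σ ℂ) : star (fischer f g) = fischer g f := by
  classical
  rw [fischer_apply, fischer_apply,
    sum_fischerWeight_eq_of_support_subset (subset_union_left (s₂ := g.support)),
    sum_fischerWeight_eq_of_support_subset (subset_union_right (s₁ := f.support)), star_sum,
    union_comm]
  refine sum_congr rfl fun m _ => ?_
  simp only [star_mul', Complex.star_def, Complex.conj_natCast, Complex.conj_conj]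
  ring

lemma fischer_monomial (s : σ →₀ ℕ) (a : ℂ) (g : MvPolynomial σ ℂ) :
    fischer (monomial s a) g = fischerWeight s * star a * coeff s g := by
  classical
  rw [fischer_apply, sum_fischerWeight_eq_of_support_subset support_monomial_subset,
    sum_singleton, coeff_monomial, if_pos rfl]

lemma fischer_one (g : MvPolynomial σ ℂ) : fischer 1 g = constantCoeff g := by
  rw [← C_1, ← monomial_zero', fischer_monomial, constantCoeff_eq]
  simp [fischerWeight]

lemma fischer_X_mul (i : σ) (f g : MvPolynomial σ ℂ) :
    fischer (X i * f) g = fischer f (pderiv i g) := by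
  induction f using MvPolynomial.induction_on' with
  | add p q hp hq =>
    rw [mul_add, map_add, map_add, LinearMap.add_apply, LinearMap.add_apply, hp, hq]
  | monomial s a =>
    rw [X, monomial_mul, one_mul, fischer_monomial, fischer_monomial, coeff_pderiv,
      add_comm (Finsupp.single i 1), fischerWeight_add_single]
    push_cast
    ring

lemma fischer_pow_mul {x : MvPolynomial σ ℂ} {T : MvPolynomial σ ℂ → MvPolynomial σ ℂ}
    (hT : ∀ f g, fischer (x * f) g = fischer f (T g)) (n : ℕ) (f g : MvPolynomial σ ℂ) :
    fischer (x ^ n * f) g = fischer f (T^[n] g) := by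
  induction n generalizing f with
  | zero => simp
  | succ n ih => rw [pow_succ, mul_assoc, ih, hT, Function.iterate_succ_apply']

variable [Fintype σ]

def linForm (c : σ → ℂ) : MvPolynomial σ ℂ := ∑ i, C (star (c i)) * X i

def dirDeriv (c : σ → ℂ) : Derivation ℂ (MvPolynomial σ ℂ) (MvPolynomial σ ℂ) :=
  ∑ i, c i • pderiv i

lemma dirDeriv_apply (c : σ → ℂ) (f : MvPolynomial σ ℂ) :
    dirDeriv c f = ∑ i, c i • pderiv i f := by
  rw [dirDeriv, ← Derivation.coeFnAddMonoidHom_apply, map_sum, Finset.sum_apply]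
  rfl

lemma fischer_linForm_mul (c : σ → ℂ) (f g : MvPolynomial σ ℂ) :
    fischer (linForm c * f) g = fischer f (dirDeriv c g) := by
  simp only [linForm, dirDeriv_apply, sum_mul, C_mul', smul_mul_assoc, map_sum, RingHom.id_apply,
    LinearMap.map_smulₛₗ, LinearMap.sum_apply, LinearMap.smul_apply, fischer_X_mul,
    Complex.star_def, Complex.conj_conj]

lemma pderiv_linForm (c : σ → ℂ) (j : σ) : pderiv j (linForm c) = C (star (c j)) := by
  classical
  simp [linForm, pderiv_X, Pi.single_apply]

lemma dirDeriv_linForm (c e : σ → ℂ) :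
    dirDeriv c (linForm e) = C (∑ i, c i * star (e i)) := by
  simp [dirDeriv_apply, pderiv_linForm, map_sum, C_mul']

end Fischer

end MvPolynomial

lemma star_cInner {d : ℕ} (a b : Fin d → ℂ) : star (cInner a b) = cInner b a := by
  simp [cInner, star_sum, mul_comm]

lemma pos_of_cInner_self_eq_one {d : ℕ} {b : Fin d → ℂ} (hb : cInner b b = 1) : 0 < d := by
  rcases Nat.eq_zero_or_pos d with rfl | hd
  · simp [cInner] at hb
  · exact hd

def zonalCoeff (d k l r : ℕ) : ℝ :=
  (-1) ^ r * (d + k + l - r - 2)! / (r ! * (k - r)! * (l - r)!)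

lemma jacobi_eq_mul_sum (d k l : ℕ) (x : ℂ) :
    jacobi d k l x = (((d + k + l - 1 : ℕ) : ℂ) / (d - 1)!) *
      ∑ r ∈ range (min k l + 1), (zonalCoeff d k l r : ℂ) * x ^ (k - r) * star x ^ (l - r) := by
  simp [jacobi, zonalCoeff]

lemma zonalCoeff_zero_mul (d k l : ℕ) : zonalCoeff d k l 0 * k ! * l ! = (d + k + l - 2)! := by
  simp [zonalCoeff]
  field_simp

lemma zonalCoeff_mul_add_zonalCoeff_succ_mul {d k l r : ℕ} (hd : 0 < d) (hk : r + 1 ≤ k)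
    (hl : r + 1 ≤ l) :
    zonalCoeff d k l r * ((k - r) * (l - r) : ℕ) +
      zonalCoeff d k l (r + 1) * ((r + 1) * (d + (k - r - 1) + (l - r - 1) + r) : ℕ) = 0 := by
  obtain ⟨K, hK⟩ : ∃ K, k - r - 1 = K := ⟨_, rfl⟩
  obtain ⟨L, hL⟩ : ∃ L, l - r - 1 = L := ⟨_, rfl⟩
  obtain ⟨E, hE⟩ : ∃ E, d + k + l - r - 3 = E := ⟨_, rfl⟩
  rw [show d + (k - r - 1) + (l - r - 1) + r = E + 1 by omega]
  simp only [zonalCoeff, show k - r = K + 1 by omega, show l - r = L + 1 by omega,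
    show k - (r + 1) = K by omega, show l - (r + 1) = L by omega,
    show d + k + l - r - 2 = E + 1 by omega, show d + k + l - (r + 1) - 2 = E by omega,
    Nat.factorial_succ]
  push_cast
  field_simp
  ring

/-- Polynomials in `z` and `z̄` on `ℂ^d`: `X (inl i)` is `zᵢ` and `X (inr i)` stands for `z̄ᵢ`,
treated as an independent variable. In these terms `zForm b`, `wForm b` and `sqForm` below are
`b^* z`, `z^* b` and `z^* z`, and `laplacian` is `∑ᵢ ∂²/∂zᵢ∂z̄ᵢ`. -/
abbrev SpherePoly (d : ℕ) := MvPolynomial (Fin d ⊕ Fin d) ℂ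

namespace SpherePoly

variable {d : ℕ}

def zForm (b : Fin d → ℂ) : SpherePoly d := linForm (Sum.elim b 0)

def wForm (b : Fin d → ℂ) : SpherePoly d := linForm (Sum.elim 0 (star b))

def sqForm : SpherePoly d := ∑ i, X (Sum.inl i) * X (Sum.inr i)

def zDeriv (a : Fin d → ℂ) : Derivation ℂ (SpherePoly d) (SpherePoly d) :=
  dirDeriv (Sum.elim a 0)

def wDeriv (a : Fin d → ℂ) : Derivation ℂ (SpherePoly d) (SpherePoly d) :=
  dirDeriv (Sum.elim 0 (star a))

def laplacian : Module.End ℂ (SpherePoly d) :=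
  ∑ i, (pderiv (Sum.inr i) : Derivation ℂ (SpherePoly d) (SpherePoly d)).toLinearMap ∘ₗ
    (pderiv (Sum.inl i) : Derivation ℂ (SpherePoly d) (SpherePoly d)).toLinearMap

/-- On the unit sphere, where `z̄ = conj z` and `sqForm = 1`, this is `g_{k,l}(b^* z)` without the
leading factor of `jacobi` (see `jacobi_eq_mul_sum`). -/
def zonal (k l : ℕ) (b : Fin d → ℂ) : SpherePoly d :=
  ∑ r ∈ range (min k l + 1),
    (zonalCoeff d k l r : ℂ) • (zForm b ^ (k - r) * wForm b ^ (l - r) * sqForm ^ r)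

lemma laplacian_apply (f : SpherePoly d) :
    laplacian f = ∑ i, pderiv (Sum.inr i) (pderiv (Sum.inl i) f) := by
  simp [laplacian]

section Forms

variable (a b : Fin d → ℂ)

lemma zForm_eq : zForm b = ∑ i, C (star (b i)) * X (Sum.inl i) := by
  simp [zForm, linForm, Fintype.sum_sum_type]

lemma wForm_eq : wForm b = ∑ i, C (b i) * X (Sum.inr i) := by
  simp [wForm, linForm, Fintype.sum_sum_type]

@[simp] lemma pderiv_inl_zForm (i : Fin d) : pderiv (Sum.inl i) (zForm b) = C (star (b i)) := by
  simp [zForm, pderiv_linForm]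

@[simp] lemma pderiv_inr_zForm (i : Fin d) : pderiv (Sum.inr i) (zForm b) = 0 := by
  simp [zForm, pderiv_linForm]

@[simp] lemma pderiv_inl_wForm (i : Fin d) : pderiv (Sum.inl i) (wForm b) = 0 := by
  simp [wForm, pderiv_linForm]

@[simp] lemma pderiv_inr_wForm (i : Fin d) : pderiv (Sum.inr i) (wForm b) = C (b i) := by
  simp [wForm, pderiv_linForm]

@[simp] lemma pderiv_inl_sqForm (i : Fin d) :
    pderiv (Sum.inl i) (sqForm : SpherePoly d) = X (Sum.inr i) := by
  classical
  simp [sqForm, pderiv_X, Pi.single_apply]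

@[simp] lemma pderiv_inr_sqForm (i : Fin d) :
    pderiv (Sum.inr i) (sqForm : SpherePoly d) = X (Sum.inl i) := by
  classical
  simp [sqForm, pderiv_X, Pi.single_apply]

lemma zDeriv_zForm : zDeriv a (zForm b) = C (cInner b a) := by
  simp [zDeriv, zForm, dirDeriv_linForm, Fintype.sum_sum_type, cInner, mul_comm]

lemma zDeriv_wForm : zDeriv a (wForm b) = 0 := by
  simp [zDeriv, wForm, dirDeriv_linForm, Fintype.sum_sum_type]

lemma wDeriv_wForm : wDeriv a (wForm b) = C (cInner a b) := by
  simp [wDeriv, wForm, dirDeriv_linForm, Fintype.sum_sum_type, cInner]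

lemma wDeriv_zForm : wDeriv a (zForm b) = 0 := by
  simp [wDeriv, zForm, dirDeriv_linForm, Fintype.sum_sum_type]

lemma fischer_zForm_mul (f g : SpherePoly d) :
    fischer (zForm a * f) g = fischer f (zDeriv a g) :=
  fischer_linForm_mul _ f g

lemma fischer_wForm_mul (f g : SpherePoly d) :
    fischer (wForm a * f) g = fischer f (wDeriv a g) :=
  fischer_linForm_mul _ f g

lemma fischer_sqForm_mul (f g : SpherePoly d) :
    fischer (sqForm * f) g = fischer f (laplacian g) := by
  simp [sqForm, sum_mul, map_sum, mul_assoc, fischer_X_mul, laplacian_apply]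

lemma fischer_forms_mul (m n r : ℕ) (h : SpherePoly d) :
    fischer (zForm a ^ m * wForm a ^ n * sqForm ^ r) h =
      constantCoeff (laplacian^[r] ((wDeriv a)^[n] ((zDeriv a)^[m] h))) := by
  rw [show zForm a ^ m * wForm a ^ n * sqForm ^ r = zForm a ^ m * (wForm a ^ n * (sqForm ^ r * 1))
    by ring, fischer_pow_mul (fischer_zForm_mul a), fischer_pow_mul (fischer_wForm_mul a),
    fischer_pow_mul fischer_sqForm_mul, fischer_one]

lemma pderiv_pderiv_forms (i : Fin d) (m n r : ℕ) :
    pderiv (Sum.inr i) (pderiv (Sum.inl i) (zForm b ^ m * wForm b ^ n * sqForm ^ r)) =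
      C (star (b i)) * C (b i) *
          (((m * n : ℕ) : SpherePoly d) * (zForm b ^ (m - 1) * wForm b ^ (n - 1) * sqForm ^ r))
      + C (star (b i)) * X (Sum.inl i) *
          (((m * r : ℕ) : SpherePoly d) * (zForm b ^ (m - 1) * wForm b ^ n * sqForm ^ (r - 1)))
      + C (b i) * X (Sum.inr i) *
          (((n * r : ℕ) : SpherePoly d) * (zForm b ^ m * wForm b ^ (n - 1) * sqForm ^ (r - 1)))
      + X (Sum.inl i) * X (Sum.inr i) *
          (((r * (r - 1) : ℕ) : SpherePoly d) *
            (zForm b ^ m * wForm b ^ n * sqForm ^ (r - 1 - 1)))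
      + (r : SpherePoly d) * (zForm b ^ m * wForm b ^ n * sqForm ^ (r - 1)) := by
  simp only [Derivation.leibniz, Derivation.leibniz_pow, pderiv_inl_zForm, pderiv_inr_zForm,
    pderiv_inl_wForm, pderiv_inr_wForm, pderiv_inl_sqForm, pderiv_inr_sqForm, map_add,
    smul_eq_mul, nsmul_eq_mul, pderiv_X_self, Derivation.map_natCast, pderiv_C, map_zero]
  push_cast
  ring

lemma laplacian_forms (m n r : ℕ) :
    laplacian (zForm b ^ m * wForm b ^ n * sqForm ^ r) =
      (((m * n : ℕ) : ℂ) * cInner b b) • (zForm b ^ (m - 1) * wForm b ^ (n - 1) * sqForm ^ r)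
      + ((r * (d + m + n + (r - 1)) : ℕ) : ℂ) • (zForm b ^ m * wForm b ^ n * sqForm ^ (r - 1)) := by
  have hbb : ∑ i, C (star (b i)) * C (b i) = (C (cInner b b) : SpherePoly d) := by
    simp [cInner, map_sum]
  simp only [laplacian_apply, pderiv_pderiv_forms, sum_add_distrib, ← sum_mul, hbb, ← zForm_eq,
    ← wForm_eq, sum_const, card_univ, Fintype.card_fin, nsmul_eq_mul, smul_eq_C_mul, map_mul,
    map_natCast]
  rw [← sqForm]
  push_cast
  linear_combination ((r : SpherePoly d) * wForm b ^ n * sqForm ^ (r - 1)) *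
      natCast_mul_pow_sub_one_mul (zForm b) m
    + ((r : SpherePoly d) * zForm b ^ m * sqForm ^ (r - 1)) *
      natCast_mul_pow_sub_one_mul (wForm b) n
    + ((r : SpherePoly d) * zForm b ^ m * wForm b ^ n) *
      natCast_mul_pow_sub_one_mul (sqForm : SpherePoly d) (r - 1)

lemma laplacian_iterate_zForm_pow_mul_wForm_pow (k l r : ℕ) :
    laplacian^[r] (zForm b ^ k * wForm b ^ l) =
      (((k.descFactorial r * l.descFactorial r : ℕ) : ℂ) * cInner b b ^ r) •
        (zForm b ^ (k - r) * wForm b ^ (l - r)) := by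
  induction r with
  | zero => simp
  | succ r ih =>
    have h := laplacian_forms b (k - r) (l - r) 0
    simp only [pow_zero, mul_one, zero_mul, Nat.cast_zero, zero_smul, add_zero] at h
    rw [Function.iterate_succ_apply', ih, map_smul, h, smul_smul, Nat.sub_sub, Nat.sub_sub,
      Nat.descFactorial_succ, Nat.descFactorial_succ]
    congr 1
    push_cast
    ring

lemma zDeriv_iterate_zForm_pow_mul (m k : ℕ) {f : SpherePoly d} (hf : zDeriv a f = 0) :
    (zDeriv a)^[m] (zForm b ^ k * f) =
      ((k.descFactorial m : ℂ) * cInner b a ^ m) • (zForm b ^ (k - m) * f) :=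
  (zDeriv a).iterate_apply_pow_mul (by rw [zDeriv_zForm, algebraMap_eq]) hf m k

lemma wDeriv_iterate_wForm_pow_mul (m l : ℕ) {f : SpherePoly d} (hf : wDeriv a f = 0) :
    (wDeriv a)^[m] (wForm b ^ l * f) =
      ((l.descFactorial m : ℂ) * cInner a b ^ m) • (wForm b ^ (l - m) * f) :=
  (wDeriv a).iterate_apply_pow_mul (by rw [wDeriv_wForm, algebraMap_eq]) hf m l

lemma fischer_forms_zForm_pow_mul_wForm_pow {k l r : ℕ} (hk : r ≤ k) (hl : r ≤ l) :
    fischer (zForm a ^ (k - r) * wForm a ^ (l - r) * sqForm ^ r) (zForm b ^ k * wForm b ^ l) =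
      k ! * l ! * cInner b a ^ (k - r) * cInner a b ^ (l - r) * cInner b b ^ r := by
  have hz : zDeriv a (wForm b ^ l) = 0 := by simp [Derivation.leibniz_pow, zDeriv_wForm]
  have hw : wDeriv a (zForm b ^ r) = 0 := by simp [Derivation.leibniz_pow, wDeriv_zForm]
  rw [fischer_forms_mul, zDeriv_iterate_zForm_pow_mul a b _ _ hz, Nat.sub_sub_self hk,
    mul_comm (zForm b ^ r), Function.Commute.iterate_left (fun x => (wDeriv a).map_smul _ x),
    wDeriv_iterate_wForm_pow_mul a b _ _ hw, Nat.sub_sub_self hl, mul_comm (wForm b ^ r)]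
  beta_reduce
  rw [smul_smul, Function.Commute.iterate_left (fun x => laplacian.map_smul _ x),
    laplacian_iterate_zForm_pow_mul_wForm_pow]
  simp only [Nat.sub_self, pow_zero, mul_one, Nat.descFactorial_self, smul_eq_C_mul, map_mul,
    constantCoeff_C]
  rw [← Nat.factorial_mul_descFactorial (Nat.sub_le k r),
    ← Nat.factorial_mul_descFactorial (Nat.sub_le l r), Nat.sub_sub_self hk, Nat.sub_sub_self hl]
  push_cast
  ring

end Forms

variable {a b : Fin d → ℂ}

lemma laplacian_zonal (k l : ℕ) (hb : cInner b b = 1) : laplacian (zonal k l b) = 0 := by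
  simp only [zonal, map_sum, map_smul, laplacian_forms, hb, mul_one, smul_add]
  rw [sum_range_succ_add_shift]
  have htop : ((k - min k l) * (l - min k l) : ℕ) = 0 := by
    rcases le_total k l with h | h <;> simp [h]
  simp only [htop, Nat.cast_zero, zero_smul, smul_zero, zero_mul, add_zero]
  refine sum_eq_zero fun r hr => ?_
  have hr : r < min k l := mem_range.mp hr
  rw [Nat.add_sub_cancel, ← Nat.sub_sub, ← Nat.sub_sub, smul_smul, smul_smul, ← add_smul]
  have hcoeff := zonalCoeff_mul_add_zonalCoeff_succ_mul (pos_of_cInner_self_eq_one hb)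
    (show r + 1 ≤ k by omega) (show r + 1 ≤ l by omega)
  rw [show ((zonalCoeff d k l r : ℂ) * ((k - r) * (l - r) : ℕ) +
      (zonalCoeff d k l (r + 1) : ℂ) * ((r + 1) * (d + (k - r - 1) + (l - r - 1) + r) : ℕ)) = 0 by
    exact_mod_cast hcoeff, zero_smul]

lemma fischer_zonal_zForm_pow_mul_wForm_pow (k l : ℕ) :
    fischer (zonal k l a) (zForm b ^ k * wForm b ^ l) =
      k ! * l ! * ∑ r ∈ range (min k l + 1),
        (zonalCoeff d k l r : ℂ) * cInner b a ^ (k - r) * cInner a b ^ (l - r) * cInner b b ^ r := by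
  simp only [zonal, map_sum, LinearMap.sum_apply, LinearMap.map_smulₛₗ, LinearMap.smul_apply,
    Complex.conj_ofReal, smul_eq_mul, mul_sum]
  refine sum_congr rfl fun r hr => ?_
  have hr : r ≤ min k l := Nat.lt_succ_iff.mp (mem_range.mp hr)
  rw [fischer_forms_zForm_pow_mul_wForm_pow a b (hr.trans (min_le_left k l))
    (hr.trans (min_le_right k l))]
  ring

lemma fischer_sqForm_pow_mul_of_laplacian_eq_zero {h : SpherePoly d} (hh : laplacian h = 0)
    {r : ℕ} (hr : r ≠ 0) (f : SpherePoly d) : fischer (sqForm ^ r * f) h = 0 := by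
  obtain ⟨r, rfl⟩ := Nat.exists_eq_succ_of_ne_zero hr
  rw [fischer_pow_mul fischer_sqForm_mul, Function.iterate_succ_apply, hh, iterate_map_zero,
    map_zero]

lemma fischer_zonal_of_laplacian_eq_zero (k l : ℕ) {h : SpherePoly d} (hh : laplacian h = 0) :
    fischer (zonal k l b) h = zonalCoeff d k l 0 * fischer (zForm b ^ k * wForm b ^ l) h := by
  rw [zonal, map_sum, LinearMap.sum_apply, sum_eq_single 0]
  · rw [LinearMap.map_smulₛₗ, LinearMap.smul_apply, Complex.conj_ofReal, smul_eq_mul]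
    simp
  · intro r _ hr
    rw [LinearMap.map_smulₛₗ, LinearMap.smul_apply, mul_comm,
      fischer_sqForm_pow_mul_of_laplacian_eq_zero hh hr, smul_zero]
  · simp

/-- Harmonicity of `zonal a` kills every `r ≥ 1` term of `zonal b`; Hermitian symmetry then moves
the remaining computation onto powers of linear forms. -/
lemma jacobi_cInner_eq_fischer_zonal (k l : ℕ) (ha : cInner a a = 1) (hb : cInner b b = 1) :
    jacobi d k l (cInner a b) =
      (((d + k + l - 1 : ℕ) / ((d - 1)! * (d + k + l - 2)!) : ℝ) : ℂ) *
        fischer (zonal k l b) (zonal k l a) := by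
  rw [fischer_zonal_of_laplacian_eq_zero k l (laplacian_zonal k l ha), ← star_fischer,
    fischer_zonal_zForm_pow_mul_wForm_pow, jacobi_eq_mul_sum, hb]
  simp only [one_pow, mul_one, star_mul', star_sum, star_pow, star_cInner, Complex.star_def,
    Complex.conj_ofReal, Complex.conj_natCast]
  have hc : (zonalCoeff d k l 0 : ℂ) * k ! * l ! = (d + k + l - 2)! := by
    exact_mod_cast zonalCoeff_zero_mul d k l
  have hN : ((d + k + l - 2)! : ℂ) ≠ 0 := by positivity
  push_cast
  field_simp
  rw [← hc]
  ring

end SpherePoly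

end

open scoped Classical

theorem stmt_9_general {d : ℕ} (X : Finset (Fin d → ℂ))
    (hXsphere : ∀ x ∈ X, cInner x x = 1) (k l : ℕ) :
    (∑ a ∈ X, ∑ b ∈ X, jacobi d k l (cInner a b)).im = 0 ∧
    0 ≤ (∑ a ∈ X, ∑ b ∈ X, jacobi d k l (cInner a b)).re := by
  have hsum : ∑ a ∈ X, ∑ b ∈ X, jacobi d k l (cInner a b) =
      (((d + k + l - 1 : ℕ) / ((d - 1)! * (d + k + l - 2)!) : ℝ) : ℂ) *
        fischer (∑ b ∈ X, SpherePoly.zonal k l b) (∑ a ∈ X, SpherePoly.zonal k l a) := by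
    simp only [map_sum, LinearMap.sum_apply, mul_sum]
    exact sum_congr rfl fun a ha => sum_congr rfl fun b hb =>
      SpherePoly.jacobi_cInner_eq_fischer_zonal k l (hXsphere a ha) (hXsphere b hb)
  have hnonneg : 0 ≤ ∑ a ∈ X, ∑ b ∈ X, jacobi d k l (cInner a b) :=
    hsum ▸ mul_nonneg (Complex.zero_le_real.mpr (by positivity)) (fischer_self_nonneg _)
  obtain ⟨hre, him⟩ := Complex.nonneg_iff.mp hnonneg
  exact ⟨him.symm, hre⟩

/-- positive semidefiniteness of the zonal kernels: for any finite
`X ⊆ Ω(d)`, `∑_{a,b∈X} g_{k,l}(a^*b)` is a nonnegative real number. -/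
theorem stmt_9 {d : ℕ} (hd : 2 ≤ d) (X : Finset (Fin d → ℂ))
    (hXsphere : ∀ x ∈ X, cInner x x = 1) (k l : ℕ) :
    (∑ a ∈ X, ∑ b ∈ X, jacobi d k l (cInner a b)).im = 0 ∧
    0 ≤ (∑ a ∈ X, ∑ b ∈ X, jacobi d k l (cInner a b)).re :=
  stmt_9_general X hXsphere k l
end
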